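/- Let a : G → ℝ>0 be a nontrivial continuous group homomorphism from a topological group G to the multiplicative group of positive reals, and let (V,τ) be a conic representation of G admitting a compact section Q whose induced multiplier satisfies σ(g,x) = a(g) for all g ∈ G and x ∈ Q. Then there is no surjective homomorphism of conic representations from any degenerate conic representation of G onto (V,τ). -/

import Mathlib

open Set

/-- `Q` is a section of the cone `V`, defined by the continuous conic (additive, positively
homogeneous, nonnegative) function `L`, which is strictly positive away from `0`. -/
structure IsConicSection {X : Type*} [AddCommGroup X] [Module ℝ X] [TopologicalSpace X]
    (V : Set X) (L : X → ℝ) (Q : Set X) : Prop where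
  continuousOn : ContinuousOn L V
  nonneg : ∀ x ∈ V, 0 ≤ L x
  map_add : ∀ x ∈ V, ∀ y ∈ V, L (x + y) = L x + L y
  map_smul : ∀ x ∈ V, ∀ a : ℝ, 0 ≤ a → L (a • x) = a * L x
  pos : ∀ x ∈ V, x ≠ 0 → 0 < L x
  sect_eq : Q = {x ∈ V | L x = 1}

/-- A conic representation of a topological group `G`: a nonzero cone `V` (a subset of a real
topological vector space closed under nonnegative linear combinations) admitting a compact
section, together with a continuous action `τ` of `G` on `V` by maps preserving nonnegative
linear combinations. -/
structure IsConicRep (G : Type*) {X : Type*} [Group G] [TopologicalSpace G]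
    [AddCommGroup X] [Module ℝ X] [TopologicalSpace X]
    (V : Set X) (τ : G → X → X) : Prop where
  nonempty : V.Nonempty
  ne_zero : V ≠ {0}
  cone : ∀ x ∈ V, ∀ y ∈ V, ∀ a b : ℝ, 0 ≤ a → 0 ≤ b → a • x + b • y ∈ V
  mapsTo : ∀ g : G, MapsTo (τ g) V V
  continuousOn : ContinuousOn (fun p : G × X => τ p.1 p.2) (univ ×ˢ V)
  act_one : ∀ x ∈ V, τ 1 x = x
  act_mul : ∀ g h : G, ∀ x ∈ V, τ (g * h) x = τ g (τ h x)
  conic_act : ∀ g : G, ∀ x ∈ V, ∀ y ∈ V, ∀ a b : ℝ, 0 ≤ a → 0 ≤ b →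
    τ g (a • x + b • y) = a • τ g x + b • τ g y
  exists_compact_section : ∃ (L : X → ℝ) (Q : Set X), IsConicSection V L Q ∧ IsCompact Q

/-- A homomorphism of conic representations of `G`: a continuous map preserving nonnegative
linear combinations, vanishing only at `0`, and commuting with the group actions. -/
structure IsConicHom (G : Type*) {X₁ X₂ : Type*} [Group G]
    [AddCommGroup X₁] [Module ℝ X₁] [TopologicalSpace X₁]
    [AddCommGroup X₂] [Module ℝ X₂] [TopologicalSpace X₂]
    (V₁ : Set X₁) (τ : G → X₁ → X₁) (V₂ : Set X₂) (η : G → X₂ → X₂)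
    (φ : X₁ → X₂) : Prop where
  continuousOn : ContinuousOn φ V₁
  mapsTo : MapsTo φ V₁ V₂
  conic : ∀ x ∈ V₁, ∀ y ∈ V₁, ∀ a b : ℝ, 0 ≤ a → 0 ≤ b →
    φ (a • x + b • y) = a • φ x + b • φ y
  ne_zero : ∀ x ∈ V₁, x ≠ 0 → φ x ≠ 0
  equivariant : ∀ g : G, ∀ x ∈ V₁, φ (τ g x) = η g (φ x)

/-- A conic representation is irreducible if its only nonzero closed `G`-invariant subcone
is the whole cone. -/
def IsIrreducibleConicRep (G : Type*) {X : Type*} [Group G]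
    [AddCommGroup X] [Module ℝ X] [TopologicalSpace X]
    (V : Set X) (τ : G → X → X) : Prop :=
  ∀ W : Set X, W ⊆ V → W.Nonempty → W ≠ {0} → IsClosed W →
    (∀ x ∈ W, ∀ y ∈ W, ∀ a b : ℝ, 0 ≤ a → 0 ≤ b → a • x + b • y ∈ W) →
    (∀ g : G, MapsTo (τ g) W W) → W = V

/-- A conic representation is degenerate if it admits a `G`-invariant section. -/
def IsDegenerateConicRep (G : Type*) {X : Type*} [Group G]
    [AddCommGroup X] [Module ℝ X] [TopologicalSpace X]
    (V : Set X) (τ : G → X → X) : Prop :=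
  ∃ (L : X → ℝ) (Q : Set X), IsConicSection V L Q ∧ ∀ g : G, MapsTo (τ g) Q Q

/-!
Pulling the section functional `L` of `V` back along `φ` gives a section functional `L ∘ φ` of
the degenerate cone `V'` whose multiplier is `a`. Since `V'` has a compact section, any two of
its section functionals are comparable, so `L ∘ φ ≤ C L'` for the functional `L'` of a
`G`-invariant section `Q'`. Along an orbit `η_g^n y` in `Q'` the value of `L ∘ φ` is
`a(g)^n L(φ y)`, which therefore stays bounded: `a(g) ≤ 1` for every `g`, and applying this to
`g⁻¹` forces `a ≡ 1`.
-/

namespace IsConicSection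

variable {X : Type*} [AddCommGroup X] [Module ℝ X] [TopologicalSpace X]
  {V Q : Set X} {L : X → ℝ} {x : X}

theorem mem_iff (h : IsConicSection V L Q) : x ∈ Q ↔ x ∈ V ∧ L x = 1 := by
  rw [h.sect_eq]; rfl

theorem map_zero (h : IsConicSection V L Q) (h0 : (0 : X) ∈ V) : L 0 = 0 := by
  simpa using h.map_smul 0 h0 0 le_rfl

theorem ne_zero_of_mem (h : IsConicSection V L Q) (hx : x ∈ Q) : x ≠ 0 := by
  rintro rfl
  obtain ⟨h0, h1⟩ := h.mem_iff.1 hx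
  simp [h.map_zero h0] at h1

theorem inv_smul_mem (h : IsConicSection V L Q)
    (hV : ∀ x ∈ V, ∀ c : ℝ, 0 ≤ c → c • x ∈ V) (hx : x ∈ V) (hx0 : x ≠ 0) :
    (L x)⁻¹ • x ∈ Q := by
  have hpos := h.pos x hx hx0
  refine h.mem_iff.2 ⟨hV x hx _ (inv_nonneg.2 hpos.le), ?_⟩
  rw [h.map_smul x hx _ (inv_nonneg.2 hpos.le), inv_mul_cancel₀ hpos.ne']

theorem exists_le_mul {L₀ L₁ L₂ : X → ℝ} {Q₀ Q₁ Q₂ : Set X}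
    (hV : ∀ x ∈ V, ∀ c : ℝ, 0 ≤ c → c • x ∈ V)
    (h₀ : IsConicSection V L₀ Q₀) (hQ₀ : IsCompact Q₀)
    (h₁ : IsConicSection V L₁ Q₁) (h₂ : IsConicSection V L₂ Q₂) :
    ∃ C : ℝ, ∀ x ∈ V, L₁ x ≤ C * L₂ x := by
  have hQ₀V : Q₀ ⊆ V := fun x hx ↦ (h₀.mem_iff.1 hx).1
  rcases Q₀.eq_empty_or_nonempty with hempty | hne
  · refine ⟨0, fun x hx ↦ ?_⟩
    have hx0 : x = 0 := by
      by_contra hx0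
      simpa [hempty] using h₀.inv_smul_mem hV hx hx0
    subst hx0
    simp [h₁.map_zero hx]
  obtain ⟨xmax, hxmax, hmax⟩ :=
    hQ₀.exists_isMaxOn hne (h₁.continuousOn.mono hQ₀V)
  obtain ⟨xmin, hxmin, hmin⟩ :=
    hQ₀.exists_isMinOn hne (h₂.continuousOn.mono hQ₀V)
  have hm : 0 < L₂ xmin := h₂.pos _ (hQ₀V hxmin) (h₀.ne_zero_of_mem hxmin)
  have hM : 0 ≤ L₁ xmax := h₁.nonneg _ (hQ₀V hxmax)
  refine ⟨L₁ xmax / L₂ xmin, fun x hx ↦ ?_⟩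
  by_cases hx0 : x = 0
  · subst hx0
    simp [h₁.map_zero hx, h₂.map_zero hx]
  set t := L₀ x
  have ht : 0 < t := h₀.pos x hx hx0
  have hz : t⁻¹ • x ∈ Q₀ := h₀.inv_smul_mem hV hx hx0
  have h₁z : t⁻¹ * L₁ x ≤ L₁ xmax := by
    simpa [h₁.map_smul x hx _ (inv_nonneg.2 ht.le)] using hmax hz
  have h₂z : L₂ xmin ≤ t⁻¹ * L₂ x := by
    simpa [h₂.map_smul x hx _ (inv_nonneg.2 ht.le)] using hmin hz
  rw [inv_mul_le_iff₀ ht] at h₁z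
  rw [le_inv_mul_iff₀ ht] at h₂z
  calc L₁ x ≤ t * L₁ xmax := h₁z
    _ = L₁ xmax / L₂ xmin * (t * L₂ xmin) := by field_simp
    _ ≤ L₁ xmax / L₂ xmin * L₂ x := by gcongr

end IsConicSection

section

variable {G X Y : Type*} [Group G]
  [AddCommGroup X] [Module ℝ X] [TopologicalSpace X]
  [AddCommGroup Y] [Module ℝ Y] [TopologicalSpace Y]

theorem IsConicHom.map_smul {V₁ : Set Y} {η : G → Y → Y} {V₂ : Set X} {τ : G → X → X}
    {φ : Y → X} (hφ : IsConicHom G V₁ η V₂ τ φ) {x : Y} (hx : x ∈ V₁) {c : ℝ} (hc : 0 ≤ c) :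
    φ (c • x) = c • φ x := by
  simpa using hφ.conic x hx x hx c 0 hc le_rfl

theorem IsConicHom.map_add {V₁ : Set Y} {η : G → Y → Y} {V₂ : Set X} {τ : G → X → X}
    {φ : Y → X} (hφ : IsConicHom G V₁ η V₂ τ φ) {x y : Y} (hx : x ∈ V₁) (hy : y ∈ V₁) :
    φ (x + y) = φ x + φ y := by
  simpa using hφ.conic x hx y hy 1 1 zero_le_one zero_le_one

theorem IsConicSection.comp_conicHom {V₁ : Set Y} {η : G → Y → Y} {V₂ Q : Set X}
    {τ : G → X → X} {φ : Y → X} {L : X → ℝ}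
    (hsec : IsConicSection V₂ L Q) (hφ : IsConicHom G V₁ η V₂ τ φ) :
    IsConicSection V₁ (L ∘ φ) {y ∈ V₁ | L (φ y) = 1} where
  continuousOn := hsec.continuousOn.comp hφ.continuousOn hφ.mapsTo
  nonneg x hx := hsec.nonneg _ (hφ.mapsTo hx)
  map_add x hx y hy := by
    simp only [Function.comp_apply, hφ.map_add hx hy,
      hsec.map_add _ (hφ.mapsTo hx) _ (hφ.mapsTo hy)]
  map_smul x hx c hc := by
    simp only [Function.comp_apply, hφ.map_smul hx hc, hsec.map_smul _ (hφ.mapsTo hx) c hc]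
  pos x hx hx0 := hsec.pos _ (hφ.mapsTo hx) (hφ.ne_zero x hx hx0)
  sect_eq := rfl

end

section

variable {G X : Type*} [Group G] [TopologicalSpace G]
  [AddCommGroup X] [Module ℝ X] [TopologicalSpace X]

theorem IsConicRep.smul_mem {V : Set X} {τ : G → X → X} (hrep : IsConicRep G V τ) :
    ∀ x ∈ V, ∀ c : ℝ, 0 ≤ c → c • x ∈ V := fun x hx c hc ↦ by
  simpa using hrep.cone x hx x hx c 0 hc le_rfl

theorem IsConicRep.exists_ne_zero {V : Set X} {τ : G → X → X} (hrep : IsConicRep G V τ) :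
    ∃ x ∈ V, x ≠ 0 := by
  by_contra! h
  exact hrep.ne_zero (Set.eq_singleton_iff_nonempty_unique_mem.2 ⟨hrep.nonempty, h⟩)

theorem IsConicRep.act_smul {V : Set X} {τ : G → X → X} (hrep : IsConicRep G V τ) (g : G)
    {x : X} (hx : x ∈ V) {c : ℝ} (hc : 0 ≤ c) : τ g (c • x) = c • τ g x := by
  simpa using hrep.conic_act g x hx x hx c 0 hc le_rfl

theorem IsConicRep.apply_eq_mul {V Q : Set X} {τ : G → X → X} {L : X → ℝ}
    (hrep : IsConicRep G V τ) (hsec : IsConicSection V L Q) {g : G} {c : ℝ}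
    (hσ : ∀ x ∈ Q, L (τ g x) = c) : ∀ x ∈ V, L (τ g x) = c * L x := by
  intro x hx
  by_cases hx0 : x = 0
  · subst hx0
    have hτ0 : τ g 0 = 0 := by simpa using hrep.act_smul g hx (le_refl (0 : ℝ))
    rw [hτ0, hsec.map_zero hx, mul_zero]
  have hpos := hsec.pos x hx hx0
  have hz := hsec.inv_smul_mem hrep.smul_mem hx hx0
  have hzV : (L x)⁻¹ • x ∈ V := hrep.smul_mem x hx _ (inv_nonneg.2 hpos.le)
  have hx_eq : x = L x • (L x)⁻¹ • x := by rw [smul_inv_smul₀ hpos.ne']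
  rw [hx_eq, hrep.act_smul g hzV hpos.le, hsec.map_smul _ (hrep.mapsTo g hzV) _ hpos.le,
    hσ _ hz, ← hx_eq, mul_comm]

theorem IsConicRep.le_one_of_mapsTo_section {V Q P : Set X} {τ : G → X → X} {L ℓ : X → ℝ}
    (hrep : IsConicRep G V τ) (hsec : IsConicSection V L Q) {g : G}
    (hinv : MapsTo (τ g) Q Q) (hℓ : IsConicSection V ℓ P) {c : ℝ}
    (hmul : ∀ x ∈ V, ℓ (τ g x) = c * ℓ x) : c ≤ 1 := by
  obtain ⟨L₀, Q₀, hsec₀, hQ₀⟩ := hrep.exists_compact_section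
  obtain ⟨C, hC⟩ := hsec₀.exists_le_mul hrep.smul_mem hQ₀ hℓ hsec
  obtain ⟨x, hx, hx0⟩ := hrep.exists_ne_zero
  have hy := hsec.inv_smul_mem hrep.smul_mem hx hx0
  set y := (L x)⁻¹ • x
  have hyV : y ∈ V := (hsec.mem_iff.1 hy).1
  have hℓy : 0 < ℓ y := hℓ.pos y hyV (hsec.ne_zero_of_mem hy)
  have horbit : ∀ n : ℕ, (τ g)^[n] y ∈ Q ∧ ℓ ((τ g)^[n] y) = c ^ n * ℓ y := by
    intro n
    induction n with
    | zero => simpa using hy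
    | succ n ih =>
      rw [Function.iterate_succ_apply', pow_succ, hmul _ (hsec.mem_iff.1 ih.1).1, ih.2]
      exact ⟨hinv ih.1, by ring⟩
  by_contra! hc
  obtain ⟨n, hn⟩ := pow_unbounded_of_one_lt (C / ℓ y) hc
  obtain ⟨hmem, hval⟩ := horbit n
  have hbound := hC _ (hsec.mem_iff.1 hmem).1
  rw [hval, (hsec.mem_iff.1 hmem).2, mul_one] at hbound
  rw [div_lt_iff₀ hℓy] at hn
  linarith

end

universe u

theorem stmt_15_general {G X : Type*} [Group G] [TopologicalSpace G]
    [AddCommGroup X] [Module ℝ X] [TopologicalSpace X]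
    -- a nontrivial continuous homomorphism `a : G → ℝ>0`
    (a : G → ℝ) (hapos : ∀ g : G, 0 < a g)
    (hahom : ∀ g h : G, a (g * h) = a g * a h) (hantriv : ∃ g : G, a g ≠ 1)
    -- a conic representation `(V,τ)` with a compact section `Q` whose multiplier is `a`
    (V : Set X) (τ : G → X → X)
    (L : X → ℝ) (Q : Set X) (hsec : IsConicSection V L Q)
    (hσ : ∀ g : G, ∀ x ∈ Q, L (τ g x) = a g) :
    ∀ (Y : Type u) [AddCommGroup Y] [Module ℝ Y] [TopologicalSpace Y]
      [IsTopologicalAddGroup Y] [ContinuousSMul ℝ Y] [T2Space Y] [SeparatingDual ℝ Y],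
      ∀ (V' : Set Y) (η : G → Y → Y),
        IsConicRep G V' η → IsDegenerateConicRep G V' η →
        ∀ φ : Y → X, IsConicHom G V' η V τ φ → φ '' V' ≠ V := by
  intro Y _ _ _ _ _ _ _ V' η hrep' hdeg φ hφ _
  obtain ⟨L', Q', hsec', hinv⟩ := hdeg
  have hpull := hsec.comp_conicHom hφ
  have hle : ∀ g, a g ≤ 1 := fun g ↦
    hrep'.le_one_of_mapsTo_section hsec' (hinv g) hpull <|
      hrep'.apply_eq_mul hpull fun y hy ↦ by
        rw [Function.comp_apply, hφ.equivariant g y hy.1]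
        exact hσ g _ (hsec.mem_iff.2 ⟨hφ.mapsTo hy.1, hy.2⟩)
  obtain ⟨g, hg⟩ := hantriv
  have ha1 : a 1 = 1 := by
    have h := hahom 1 1
    rw [mul_one] at h
    exact (mul_eq_left₀ (hapos 1).ne').1 h.symm
  have hinv_mul : a g * a g⁻¹ = 1 := by rw [← hahom, mul_inv_cancel, ha1]
  have hlt : a g < 1 := lt_of_le_of_ne (hle g) hg
  nlinarith [hle g⁻¹, hapos g]

/-- Let `a : G → ℝ>0` be a nontrivial continuous group homomorphism from a
topological group `G` to the multiplicative group of positive reals, and let `(V,τ)` be a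
conic representation of `G` admitting a compact section `Q` whose induced multiplier satisfies
`σ(g,x) = a(g)` for all `g ∈ G` and `x ∈ Q`.  Then there is no surjective homomorphism of
conic representations from any degenerate conic representation of `G` onto `(V,τ)`. -/
theorem stmt_15 {G X : Type*} [Group G] [TopologicalSpace G] [IsTopologicalGroup G]
    [AddCommGroup X] [Module ℝ X] [TopologicalSpace X]
    [IsTopologicalAddGroup X] [ContinuousSMul ℝ X] [T2Space X] [SeparatingDual ℝ X]
    -- a nontrivial continuous homomorphism `a : G → ℝ>0`
    (a : G → ℝ) (hapos : ∀ g : G, 0 < a g) (hacont : Continuous a)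
    (hahom : ∀ g h : G, a (g * h) = a g * a h) (hantriv : ∃ g : G, a g ≠ 1)
    -- a conic representation `(V,τ)` with a compact section `Q` whose multiplier is `a`
    (V : Set X) (τ : G → X → X) (hrep : IsConicRep G V τ)
    (L : X → ℝ) (Q : Set X) (hsec : IsConicSection V L Q) (hQcomp : IsCompact Q)
    (hσ : ∀ g : G, ∀ x ∈ Q, L (τ g x) = a g) :
    ∀ (Y : Type u) [AddCommGroup Y] [Module ℝ Y] [TopologicalSpace Y]
      [IsTopologicalAddGroup Y] [ContinuousSMul ℝ Y] [T2Space Y] [SeparatingDual ℝ Y],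
      ∀ (V' : Set Y) (η : G → Y → Y),
        IsConicRep G V' η → IsDegenerateConicRep G V' η →
        ∀ φ : Y → X, IsConicHom G V' η V τ φ → φ '' V' ≠ V :=
  stmt_15_general a hapos hahom hantriv V τ L Q hsec hσ
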